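/- Let γ0: T → ℝ extend holomorphically to U_{2ρ0} with 4‖Im γ0'‖_{L∞(U_{ρ0})} < 1. Then the complex extension of the initial normal velocity, s0(y1) := −2 ∫_T K2(z1, γ0(y1) − γ0(y1−z1)) (γ0'(y1) − γ0'(y1−z1)) dz1, is a well-defined holomorphic function on U_{ρ0}, and for every k ∈ ℕ there is a constant C0 > 0, depending only on the L∞(U_{ρ0})-norms of finitely many derivatives of γ0, such that ‖s0^{(k)}‖_{L∞(U_{ρ0})} ≤ C0; in particular all derivatives of s0 are obtained by differentiation under the integral sign. -/

import Mathlib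

open MeasureTheory Real Set

noncomputable section

namespace MIPM

/-- The horizontal strip `U_r ⊆ ℂ`. -/
def U (r : ℝ) : Set ℂ := {z : ℂ | |z.im| < r}

/-- The domain `Ω_r = U_r × (-2,2)`. -/
def Om (r : ℝ) : Set (ℂ × ℝ) := {p | |p.1.im| < r ∧ p.2 ∈ Ioo (-2:ℝ) 2}

/-- Fundamental domain for `𝕋 × (-2,2)` inside `ℝ²`. -/
def Om0 : Set (ℝ × ℝ) := Ioc (-π) π ×ˢ Ioo (-2:ℝ) 2

/-- Fundamental domain for `𝕋 × ℝ` inside `ℝ²`. -/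
def D2 : Set (ℝ × ℝ) := Ioc (-π) π ×ˢ (univ : Set ℝ)

/-- `|z1|` on the torus `ℝ/2πℤ`: absolute value of the representative in `[-π,π)`. -/
def tAbs (x : ℝ) : ℝ := |x - 2*π*⌊(x+π)/(2*π)⌋|

/-- The norm `|a|_*` on `𝕋 × ℂ`. -/
def starNorm (a1 : ℝ) (a2 : ℂ) : ℝ := Real.sqrt ((tAbs a1)^2 + (norm a2)^2)

/-- Second component of the Biot–Savart kernel, complex extension. -/
def K2 (a1 : ℝ) (a2 : ℂ) : ℂ :=
  ((1/(4*π) : ℝ) : ℂ) * Complex.sin (a1 : ℂ) / (Complex.cosh a2 - Complex.cos (a1 : ℂ))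

/-- The Biot–Savart kernel on `𝕋 × ℝ`. -/
def K (z : ℝ × ℝ) : ℝ × ℝ :=
  ((4*π) * (Real.cosh z.2 - Real.cos z.1))⁻¹ • ((-Real.sinh z.2, Real.sin z.1) : ℝ × ℝ)

/-- `∂_{y1}` : complex derivative in the first variable. -/
def dy1 (η : ℂ → ℝ → ℂ) (p : ℂ × ℝ) : ℂ := deriv (fun w => η w p.2) p.1

/-- `∂_{y2}` : real derivative in the second variable. -/
def dy2 (η : ℂ → ℝ → ℂ) (p : ℂ × ℝ) : ℂ := deriv (fun s => η p.1 s) p.2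

/-- Membership in the Banach space `B_r`:  a `2π`-periodic real-valued function on
`𝕋 × (-2,2)` whose extension is holomorphic in the first variable on `U_r`, whose
`y2`-derivative exists on `Ω_r`, is uniformly continuous and holomorphic in the first
variable, and with finite norm. -/
structure MemB (r : ℝ) (η : ℂ → ℝ → ℂ) : Prop where
  periodic : ∀ z y2, η (z + 2*π) y2 = η z y2
  realOnReal : ∀ (x : ℝ) (y2 : ℝ), (η (x:ℂ) y2).im = 0
  contOn : ContinuousOn (fun p : ℂ × ℝ => η p.1 p.2) (Om r)
  holo1 : ∀ y2 ∈ Ioo (-2:ℝ) 2, DifferentiableOn ℂ (fun z => η z y2) (U r)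
  diff2 : ∀ p ∈ Om r, DifferentiableAt ℝ (fun s => η p.1 s) p.2
  ucont2 : UniformContinuousOn (dy2 η) (Om r)
  holo12 : ∀ y2 ∈ Ioo (-2:ℝ) 2, DifferentiableOn ℂ (fun z => dy2 η (z, y2)) (U r)
  bdd : BddAbove ((fun p => norm (η p.1 p.2) + norm (dy1 η p)
          + norm (dy2 η p)) '' Om r)

/-- Sup norm of a nonnegative quantity over a set. -/
def supOn (f : ℂ × ℝ → ℝ) (s : Set (ℂ × ℝ)) : ℝ := sSup (f '' s)

/-- The norm of `B_r`. -/
def Bnorm (r : ℝ) (η : ℂ → ℝ → ℂ) : ℝ :=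
  supOn (fun p => norm (η p.1 p.2)) (Om r)
  + supOn (fun p => norm (dy1 η p)) (Om r)
  + supOn (fun p => norm (dy2 η p)) (Om r)

/-- Hypotheses on the (complex extension of the) initial interface `γ0`:
`2π`-periodic, real on the reals, holomorphic on `U_{2 r0}` and `4‖Im γ0'‖_{L∞(U_{r0})} < 1`. -/
structure GoodGamma (r0 : ℝ) (γ : ℂ → ℂ) : Prop where
  pos : 0 < r0
  periodic : ∀ z, γ (z + 2*π) = γ z
  realOnReal : ∀ x : ℝ, (γ (x:ℂ)).im = 0
  holo : DifferentiableOn ℂ γ (U (2*r0))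
  small : ∃ c < (1:ℝ), ∀ z ∈ U r0, 4 * |(deriv γ z).im| ≤ c

/-- Complex extension of the initial normal velocity `s0`. -/
def s0C (γ : ℂ → ℂ) (y1 : ℂ) : ℂ :=
  -2 * ∫ z1 in Ioc (-π) π,
      K2 z1 (γ y1 - γ (y1 - (z1:ℂ))) * (deriv γ y1 - deriv γ (y1 - (z1:ℂ)))

/-- `f_t^η(y) = γ0(y1) + t s0(y1) + (1/2) t^{1+α} η(y)`. -/
def fC (γ : ℂ → ℂ) (α : ℝ) (η : ℂ → ℝ → ℂ) (t : ℝ) (y1 : ℂ) (y2 : ℝ) : ℂ :=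
  γ y1 + (t:ℂ) * s0C γ y1 + (1/2 : ℂ) * ((t ^ (1+α) : ℝ) : ℂ) * η y1 y2

/-- `∂_{y1} f_t^η`. -/
def dfC (γ : ℂ → ℂ) (α : ℝ) (η : ℂ → ℝ → ℂ) (t : ℝ) (y1 : ℂ) (y2 : ℝ) : ℂ :=
  deriv γ y1 + (t:ℂ) * deriv (s0C γ) y1
    + (1/2 : ℂ) * ((t ^ (1+α) : ℝ) : ℂ) * deriv (fun w => η w y2) y1

/-- Second component of `ΔX_t^η(y,z)`. -/
def DX2 (γ : ℂ → ℂ) (α : ℝ) (η : ℂ → ℝ → ℂ) (t : ℝ) (y1 : ℂ) (y2 : ℝ) (z : ℝ × ℝ) : ℂ :=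
  (t:ℂ) * ((y2:ℂ) - (z.2:ℂ)) + (fC γ α η t y1 y2 - fC γ α η t (y1 - (z.1:ℂ)) z.2)

/-- `Δ∂_{y1} f_t^η (y,z)`. -/
def DdfC (γ : ℂ → ℂ) (α : ℝ) (η : ℂ → ℝ → ℂ) (t : ℝ) (y1 : ℂ) (y2 : ℝ) (z : ℝ × ℝ) : ℂ :=
  dfC γ α η t y1 y2 - dfC γ α η t (y1 - (z.1:ℂ)) z.2

/-- The nonlinear map `F` of the fixed point problem. -/
def Fmap (γ : ℂ → ℂ) (α : ℝ) (η : ℂ → ℝ → ℂ) (t : ℝ) (y1 : ℂ) (y2 : ℝ) : ℂ :=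
  if t = 0 then 0 else
  -∫ z in Om0,
     (K2 z.1 (DX2 γ α η t y1 y2 z) * DdfC γ α η t y1 y2 z
      - K2 z.1 (γ y1 - γ (y1 - (z.1:ℂ))) * (deriv γ y1 - deriv γ (y1 - (z.1:ℂ))))

/-- The sets `𝒰^κ ⊆ 𝕋 × ℂ` (periodically extended to `ℝ × ℂ`). -/
def Uk (κ : ℝ) : Set (ℝ × ℂ) :=
  {a | |a.2.im| < κ * (tAbs a.1 + |a.2.re|) ∧ |a.2.im| < π/2}

/-- The set `𝒰 = {a : cosh a2 - cos a1 ≠ 0}`. -/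
def Uset : Set (ℝ × ℂ) := {a | Complex.cosh a.2 - Complex.cos (a.1:ℂ) ≠ 0}

/-- Conclusion of the good-set lemma (Lemma 6.5): for all `η` in the `R`-ball of `B_r`,
`ΔX_t^η` takes values in `closure 𝒰^{3/8}` and `t|y2-z2| ≤ C0 |ΔX_t^η|_*`. -/
def GoodSetProp (γ : ℂ → ℂ) (α R C0 T r0 : ℝ) : Prop :=
  ∀ r ∈ Ioo (0:ℝ) r0, ∀ η, MemB r η → Bnorm r η < R →
    ∀ t ∈ Ico (0:ℝ) T, ∀ y ∈ Om r, ∀ z ∈ Om0,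
      ((z.1, DX2 γ α η t y.1 y.2 z) ∈ closure (Uk (3/8))) ∧
      t * |y.2 - z.2| ≤ C0 * starNorm z.1 (DX2 γ α η t y.1 y.2 z)

/-- The time interval `I_ρ` of the existence proposition. -/
def Iset (C0 abar T r0 r α : ℝ) : Set ℝ :=
  {t | 0 ≤ t ∧ t < T ∧ C0 * (t ^ (1-α) : ℝ) * |Real.log t| < abar * (r0 - r)}

/-- `t ↦ η_t` is a solution of the fixed point problem with the properties of
Proposition 6.13. -/
def FPSol (γ : ℂ → ℂ) (α r0 C0 abar T : ℝ) (η : ℝ → ℂ → ℝ → ℂ) : Prop :=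
  (∀ y1 y2, η 0 y1 y2 = 0) ∧
  ∀ r ∈ Ioo (0:ℝ) r0,
    (∀ t ∈ Iset C0 abar T r0 r α, MemB r (η t) ∧ Bnorm r (η t) < 1) ∧
    (∀ t ∈ Iset C0 abar T r0 r α, ∀ ε > 0, ∃ δ > 0, ∀ s ∈ Iset C0 abar T r0 r α,
        |s - t| < δ → Bnorm r (fun z y2 => η s z y2 - η t z y2) < ε) ∧
    (∀ t ∈ Iset C0 abar T r0 r α, 0 < t → ∀ y ∈ Om r,
        η t y.1 y.2 = ((t ^ (-(1+α)) : ℝ) : ℂ) * ∫ s in (0:ℝ)..t, Fmap γ α (η s) s y.1 y.2)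

/-- Test functions on `[0,T) × 𝕋 × ℝ`. -/
structure TestFn (T : ℝ) (φ : ℝ → ℝ → ℝ → ℝ) : Prop where
  smooth : ContDiff ℝ (⊤ : ℕ∞) (fun p : ℝ × ℝ × ℝ => φ p.1 p.2.1 p.2.2)
  periodic : ∀ t x1 x2, φ t (x1 + 2*π) x2 = φ t x1 x2
  support : ∃ T' < T, ∃ R : ℝ, ∀ t x1 x2, (T' ≤ t ∨ R ≤ |x2|) → φ t x1 x2 = 0

/-- `∂_t φ`. -/
def pT (φ : ℝ → ℝ → ℝ → ℝ) (t x1 x2 : ℝ) : ℝ := deriv (fun s => φ s x1 x2) t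
/-- `∂_{x1} φ`. -/
def p1 (φ : ℝ → ℝ → ℝ → ℝ) (t x1 x2 : ℝ) : ℝ := deriv (fun u => φ t u x2) x1
/-- `∂_{x2} φ`. -/
def p2 (φ : ℝ → ℝ → ℝ → ℝ) (t x1 x2 : ℝ) : ℝ := deriv (fun v => φ t x1 v) x2

end MIPM

open MIPM

section S8aux
open Filter Topology

lemma trig_lower {s : ℝ} (h0 : 0 ≤ s) (hpi : s ≤ π) :
    9 / (8 * π ^ 2) * s ^ 2 ≤ Real.cos (s / 4) - Real.cos s := by
  have hπ := Real.pi_pos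
  have h1 : Real.cos (s/4) - Real.cos s = 2 * Real.sin (5*s/8) * Real.sin (3*s/8) := by
    rw [Real.cos_sub_cos]; ring_nf
    rw [show s * (-3/8) = -(s * (3/8)) by ring, Real.sin_neg]; ring
  have h38 : Real.sin (3*s/8) ≥ 2/π * (3*s/8) :=
    Real.mul_le_sin (by positivity) (by nlinarith)
  have h58 : Real.sin (3*s/8) ≤ Real.sin (5*s/8) := by
    have := Real.sin_sub_sin (5*s/8) (3*s/8)
    have hc : 0 ≤ Real.cos ((5*s/8 + 3*s/8)/2) := by
      rw [show (5*s/8 + 3*s/8)/2 = s/2 by ring]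
      exact Real.cos_nonneg_of_mem_Icc ⟨by linarith, by linarith⟩
    have hs : 0 ≤ Real.sin ((5*s/8 - 3*s/8)/2) := by
      rw [show (5*s/8 - 3*s/8)/2 = s/8 by ring]
      exact Real.sin_nonneg_of_nonneg_of_le_pi (by positivity) (by linarith)
    nlinarith
  have hs38 : 0 ≤ Real.sin (3*s/8) := Real.sin_nonneg_of_nonneg_of_le_pi (by positivity) (by nlinarith)
  have key : 2 * Real.sin (5*s/8) * Real.sin (3*s/8) ≥ 2 * (2/π * (3*s/8))^2 := by
    have h2 : 2/π * (3*s/8) ≤ Real.sin (3*s/8) := h38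
    have ha : (0:ℝ) ≤ 2/π * (3*s/8) := by positivity
    have k1 := mul_self_le_mul_self ha h2
    have k2 := mul_le_mul_of_nonneg_right h58 hs38
    nlinarith [k1, k2]
  rw [h1]
  have heq : (2 : ℝ) * (2/π * (3*s/8))^2 = 9/(8*π^2) * s^2 := by
    field_simp; ring
  linarith

lemma denom_lower {x : ℝ} (hx : |x| ≤ π) {a2 : ℂ} (ha : |a2.im| ≤ |x|/4) :
    9 / (8 * π ^ 2) * x ^ 2 ≤ (Complex.cosh a2 - Complex.cos (x:ℂ)).re := by
  have hπ := Real.pi_pos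
  have hre : (Complex.cosh a2 - Complex.cos (x:ℂ)).re
      = Real.cosh a2.re * Real.cos a2.im - Real.cos x := by
    rw [Complex.sub_re, ← Complex.ofReal_cos, Complex.ofReal_re]
    congr 1
    conv_lhs => rw [← Complex.re_add_im a2]
    rw [Complex.cosh_add, Complex.cosh_mul_I, Complex.sinh_mul_I]
    simp [← Complex.ofReal_cosh, ← Complex.ofReal_sinh, ← Complex.ofReal_cos,
      ← Complex.ofReal_sin, Complex.add_re, Complex.mul_re]
  rw [hre]
  have him : |a2.im| ≤ π/4 := le_trans ha (by linarith)
  have hcos1 : Real.cos (|x|/4) ≤ Real.cos a2.im := by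
    rw [← Real.cos_abs a2.im]
    exact Real.cos_le_cos_of_nonneg_of_le_pi (abs_nonneg _) (by linarith [abs_nonneg x]) ha
  have hcosnn : 0 ≤ Real.cos a2.im := by
    rw [← Real.cos_abs a2.im]
    exact Real.cos_nonneg_of_mem_Icc ⟨by linarith [abs_nonneg a2.im], by linarith⟩
  have hch : 1 ≤ Real.cosh a2.re := Real.one_le_cosh a2.re
  have h1 : Real.cos (|x|/4) ≤ Real.cosh a2.re * Real.cos a2.im := by nlinarith
  have h2 := trig_lower (abs_nonneg x) hx
  rw [Real.cos_abs x] at h2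
  rw [← sq_abs x]
  linarith
lemma seg_hasDeriv {f f' : ℂ → ℂ} {b : ℝ}
    (hd : ∀ w : ℂ, |w.im| ≤ b → HasDerivAt f (f' w) w)
    {y : ℂ} (hy : |y.im| ≤ b) (t : ℝ) :
    ∀ u : ℝ, HasDerivAt (fun u : ℝ => f (y - (t:ℂ) + (u:ℂ) * t))
      (f' (y - (t:ℂ) + (u:ℂ) * t) * t) u := by
  intro u
  have him : (y - (t:ℂ) + (u:ℂ) * t).im = y.im := by simp
  have hψ : HasDerivAt (fun w : ℂ => y - (t:ℂ) + w * t) (t:ℂ) u :=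
    ((hasDerivAt_id ((u:ℂ))).mul_const (t:ℂ)).const_add (y - (t:ℂ)) |>.congr_deriv (by simp)
  have hcomp : HasDerivAt (fun w : ℂ => f (y - (t:ℂ) + w * t))
      (f' (y - (t:ℂ) + (u:ℂ) * t) * t) (u:ℂ) :=
    (hd _ (by rw [him]; exact hy)).comp (u:ℂ) hψ
  exact hcomp.comp_ofReal

lemma seg_norm_le {f f' : ℂ → ℂ} {b M : ℝ}
    (hd : ∀ w : ℂ, |w.im| ≤ b → HasDerivAt f (f' w) w)
    (hM : ∀ w : ℂ, |w.im| ≤ b → ‖f' w‖ ≤ M)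
    {y : ℂ} (hy : |y.im| ≤ b) (t : ℝ) :
    ‖f y - f (y - (t:ℂ))‖ ≤ M * |t| := by
  have hder := seg_hasDeriv hd hy t
  have him : ∀ u : ℝ, (y - (t:ℂ) + (u:ℂ) * t).im = y.im := fun u => by simp
  have key := Convex.norm_image_sub_le_of_norm_hasDerivWithin_le
    (f := fun u : ℝ => f (y - (t:ℂ) + (u:ℂ) * t))
    (f' := fun u : ℝ => f' (y - (t:ℂ) + (u:ℂ) * t) * t)
    (fun u _ => (hder u).hasDerivWithinAt)
    (fun u _ => by
      rw [norm_mul, Complex.norm_real, Real.norm_eq_abs]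
      exact mul_le_mul_of_nonneg_right (hM _ (by rw [him u]; exact hy)) (abs_nonneg t))
    (convex_Icc (0:ℝ) 1) (left_mem_Icc.2 zero_le_one) (right_mem_Icc.2 zero_le_one)
  simpa using key

lemma seg_im_le {f f' : ℂ → ℂ} {b M : ℝ}
    (hd : ∀ w : ℂ, |w.im| ≤ b → HasDerivAt f (f' w) w)
    (hM : ∀ w : ℂ, |w.im| ≤ b → |(f' w).im| ≤ M)
    {y : ℂ} (hy : |y.im| ≤ b) (t : ℝ) :
    |(f y - f (y - (t:ℂ))).im| ≤ M * |t| := by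
  have hder := seg_hasDeriv hd hy t
  have him : ∀ u : ℝ, (y - (t:ℂ) + (u:ℂ) * t).im = y.im := fun u => by simp
  have key := Convex.norm_image_sub_le_of_norm_hasDerivWithin_le
    (f := fun u : ℝ => (f (y - (t:ℂ) + (u:ℂ) * t)).im)
    (f' := fun u : ℝ => (f' (y - (t:ℂ) + (u:ℂ) * t) * t).im)
    (fun u _ => (Complex.imCLM.hasFDerivAt.comp_hasDerivAt u (hder u)).hasDerivWithinAt)
    (fun u _ => by
      show ‖(f' (y - (t:ℂ) + (u:ℂ) * t) * t).im‖ ≤ M * |t|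
      have heq : (f' (y - (t:ℂ) + (u:ℂ) * t) * t).im = (f' (y - (t:ℂ) + (u:ℂ) * t)).im * t := by
        simp [Complex.mul_im]
      rw [Real.norm_eq_abs, heq, abs_mul]
      exact mul_le_mul_of_nonneg_right (hM _ (by rw [him u]; exact hy)) (abs_nonneg t))
    (convex_Icc (0:ℝ) 1) (left_mem_Icc.2 zero_le_one) (right_mem_Icc.2 zero_le_one)
  simp only [Complex.ofReal_one, Complex.ofReal_zero, one_mul, zero_mul, add_zero,
    sub_add_cancel, Real.norm_eq_abs] at key
  calc |(f y - f (y - (t:ℂ))).im| = |(f y).im - (f (y - (t:ℂ))).im| := by rw [Complex.sub_im]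
    _ ≤ M * |t| := by simpa using key

lemma isOpen_U (r : ℝ) : IsOpen (U r) :=
  isOpen_lt (continuous_abs.comp Complex.continuous_im) continuous_const
lemma mem_U {r : ℝ} {z : ℂ} : z ∈ U r ↔ |z.im| < r := Iff.rfl
lemma U_mono {r r' : ℝ} (h : r ≤ r') : U r ⊆ U r' := fun _ hz => lt_of_lt_of_le hz h

/-- The integrand. -/
def Ig (γ : ℂ → ℂ) (x : ℝ) (y : ℂ) : ℂ :=
  K2 x (γ y - γ (y - (x:ℂ))) * (deriv γ y - deriv γ (y - (x:ℂ)))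

structure Core (γ : ℂ → ℂ) (r0 ρ M2 : ℝ) : Prop where
  hr0 : 0 < r0
  hρ1 : r0 < ρ
  hρ2 : ρ < 2*r0
  hγd : DifferentiableOn ℂ γ (U (2*r0))
  hsm : ∀ z : ℂ, |z.im| ≤ ρ → |(deriv γ z).im| ≤ 1/4
  hM2nn : 0 ≤ M2
  hM2 : ∀ z : ℂ, |z.im| ≤ ρ → ‖deriv (deriv γ) z‖ ≤ M2

variable {γ : ℂ → ℂ} {r0 ρ M2 : ℝ}

lemma Core.memU2 (hc : Core γ r0 ρ M2) {w : ℂ} (hw : |w.im| ≤ ρ) : w ∈ U (2*r0) :=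
  lt_of_le_of_lt hw hc.hρ2

lemma Core.hA (hc : Core γ r0 ρ M2) : AnalyticOnNhd ℂ γ (U (2*r0)) :=
  hc.hγd.analyticOnNhd (isOpen_U _)

lemma Core.hA1 (hc : Core γ r0 ρ M2) : AnalyticOnNhd ℂ (deriv γ) (U (2*r0)) := hc.hA.deriv

lemma Core.hd0 (hc : Core γ r0 ρ M2) {w : ℂ} (hw : |w.im| ≤ ρ) :
    HasDerivAt γ (deriv γ w) w :=
  (hc.hγd.differentiableAt ((isOpen_U _).mem_nhds (hc.memU2 hw))).hasDerivAt

lemma Core.hd1 (hc : Core γ r0 ρ M2) {w : ℂ} (hw : |w.im| ≤ ρ) :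
    HasDerivAt (deriv γ) (deriv (deriv γ) w) w :=
  ((hc.hA1.differentiableOn).differentiableAt ((isOpen_U _).mem_nhds (hc.memU2 hw))).hasDerivAt

lemma Core.him (hc : Core γ r0 ρ M2) {y : ℂ} (hy : |y.im| ≤ ρ) (x : ℝ) :
    |(γ y - γ (y - (x:ℂ))).im| ≤ |x|/4 := by
  have := seg_im_le (f := γ) (f' := deriv γ) (b := ρ) (M := 1/4)
    (fun w hw => hc.hd0 hw) (fun w hw => hc.hsm w hw) hy x
  linarith

lemma Core.hΔ (hc : Core γ r0 ρ M2) {y : ℂ} (hy : |y.im| ≤ ρ) (x : ℝ) :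
    ‖deriv γ y - deriv γ (y - (x:ℂ))‖ ≤ M2 * |x| :=
  seg_norm_le (fun w hw => hc.hd1 hw) (fun w hw => hc.hM2 w hw) hy x

lemma Core.hden (hc : Core γ r0 ρ M2) {y : ℂ} (hy : |y.im| ≤ ρ) {x : ℝ} (hx : |x| ≤ π) :
    9 / (8 * π ^ 2) * x ^ 2 ≤ ‖Complex.cosh (γ y - γ (y - (x:ℂ))) - Complex.cos (x:ℂ)‖ :=
  le_trans (denom_lower hx (hc.him hy x)) (Complex.re_le_norm _)

lemma Core.hdenne (hc : Core γ r0 ρ M2) {y : ℂ} (hy : |y.im| ≤ ρ) {x : ℝ} (hx : |x| ≤ π)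
    (hx0 : x ≠ 0) :
    Complex.cosh (γ y - γ (y - (x:ℂ))) - Complex.cos (x:ℂ) ≠ 0 := by
  intro h
  have := hc.hden hy hx
  rw [h, norm_zero] at this
  have hπ := Real.pi_pos
  have h2 : 0 < x^2 := sq_pos_of_ne_zero hx0
  have h3 : 0 < 9/(8*π^2)*x^2 := by positivity
  linarith

lemma Ig_zero (γ : ℂ → ℂ) (y : ℂ) : Ig γ 0 y = 0 := by
  simp [Ig, K2]

lemma Core.Ig_bound (hc : Core γ r0 ρ M2) {y : ℂ} (hy : |y.im| ≤ ρ) {x : ℝ} (hx : |x| ≤ π) :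
    ‖Ig γ x y‖ ≤ 2*π/9 * M2 := by
  have hπ := Real.pi_pos
  rcases eq_or_ne x 0 with rfl | hx0
  · rw [Ig_zero]
    simp only [norm_zero]
    exact mul_nonneg (by positivity) hc.hM2nn
  · have hden := hc.hden hy hx
    have hΔ := hc.hΔ hy x
    have hsin : ‖Complex.sin (x:ℂ)‖ ≤ |x| := by
      rw [← Complex.ofReal_sin, Complex.norm_real, Real.norm_eq_abs]
      exact Real.abs_sin_le_abs
    have hx2 : (0:ℝ) < x^2 := sq_pos_of_ne_zero hx0
    have hdpos : (0:ℝ) < 9/(8*π^2) * x^2 := by positivity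
    rw [Ig, K2]
    rw [norm_mul, norm_div, norm_mul, Complex.norm_real, Real.norm_eq_abs]
    have h14 : |1/(4*π)| = 1/(4*π) := abs_of_pos (by positivity)
    rw [h14]
    calc 1/(4*π) * ‖Complex.sin (x:ℂ)‖ /
          ‖Complex.cosh (γ y - γ (y - (x:ℂ))) - Complex.cos (x:ℂ)‖ *
          ‖deriv γ y - deriv γ (y - (x:ℂ))‖
        ≤ 1/(4*π) * |x| / (9/(8*π^2) * x^2) * (M2 * |x|) := by
          apply mul_le_mul _ _ (norm_nonneg _) (by positivity)
          · apply div_le_div₀ (by positivity) _ hdpos hden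
            exact mul_le_mul_of_nonneg_left hsin (by positivity)
          · exact hΔ
      _ = 2*π/9 * M2 * (|x|^2 / x^2) := by
          field_simp
          ring
      _ = 2*π/9 * M2 := by rw [sq_abs, div_self hx2.ne', mul_one]
  
lemma Core.Ig_diffOn (hc : Core γ r0 ρ M2) {x : ℝ} (hx : |x| ≤ π) :
    DifferentiableOn ℂ (fun y => Ig γ x y) (U ρ) := by
  rcases eq_or_ne x 0 with rfl | hx0
  · simpa [Ig_zero] using (differentiableOn_const (0:ℂ) (s := U ρ))
  · have hsub : U ρ ⊆ U (2*r0) := U_mono (by linarith [hc.hρ2])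
    have hγρ : DifferentiableOn ℂ γ (U ρ) := hc.hγd.mono hsub
    have hmap : ∀ y ∈ U ρ, y - (x:ℂ) ∈ U ρ := fun y hy => by
      simpa [mem_U] using hy
    have hγτ : DifferentiableOn ℂ (fun y => γ (y - (x:ℂ))) (U ρ) :=
      hγρ.comp ((differentiable_id.sub_const _).differentiableOn) hmap
    have hDρ : DifferentiableOn ℂ (deriv γ) (U ρ) := hc.hA1.differentiableOn.mono hsub
    have hDτ : DifferentiableOn ℂ (fun y => deriv γ (y - (x:ℂ))) (U ρ) :=
      hDρ.comp ((differentiable_id.sub_const _).differentiableOn) hmap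
    have hdenom : DifferentiableOn ℂ
        (fun y => Complex.cosh (γ y - γ (y - (x:ℂ))) - Complex.cos (x:ℂ)) (U ρ) :=
      ((Complex.differentiable_cosh.comp_differentiableOn (hγρ.sub hγτ)).sub
        (differentiableOn_const _))
    have hne : ∀ y ∈ U ρ, Complex.cosh (γ y - γ (y - (x:ℂ))) - Complex.cos (x:ℂ) ≠ 0 :=
      fun y hy => hc.hdenne (le_of_lt hy) hx hx0
    simp only [Ig, K2]
    exact ((differentiableOn_const _).div hdenom hne).mul (hDρ.sub hDτ)

lemma Core.Ig_contOn (hc : Core γ r0 ρ M2) {y : ℂ} (hy : y ∈ U ρ) :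
    ContinuousOn (fun x : ℝ => Ig γ x y) (Ioc (-π) π \ {0}) := by
  have hπ := Real.pi_pos
  have habs : ∀ x ∈ Ioc (-π) π \ ({0} : Set ℝ), |x| ≤ π := fun x hx =>
    abs_le.2 ⟨le_of_lt hx.1.1, hx.1.2⟩
  have hmap : ∀ x : ℝ, y - (x:ℂ) ∈ U (2*r0) := fun x => by
    have : (y - (x:ℂ)).im = y.im := by simp
    rw [mem_U, this]; exact lt_trans hy hc.hρ2
  have hcy : Continuous (fun x : ℝ => y - (x:ℂ)) := by continuity
  have hγc : ContinuousOn γ (U (2*r0)) := hc.hγd.continuousOn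
  have hγτ : ContinuousOn (fun x : ℝ => γ (y - (x:ℂ))) univ :=
    hγc.comp hcy.continuousOn (fun x _ => hmap x)
  have hDc : ContinuousOn (deriv γ) (U (2*r0)) := hc.hA1.continuousOn
  have hDτ : ContinuousOn (fun x : ℝ => deriv γ (y - (x:ℂ))) univ :=
    hDc.comp hcy.continuousOn (fun x _ => hmap x)
  have hne : ∀ x ∈ Ioc (-π) π \ ({0} : Set ℝ),
      Complex.cosh (γ y - γ (y - (x:ℂ))) - Complex.cos (x:ℂ) ≠ 0 := fun x hx =>
    hc.hdenne (le_of_lt hy) (habs x hx) (fun h => hx.2 (by simpa using h))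
  simp only [Ig, K2]
  apply ContinuousOn.mul
  · apply ContinuousOn.div
    · exact (continuous_const.mul (Complex.continuous_sin.comp
        (Complex.continuous_ofReal))).continuousOn
    · exact ((Complex.continuous_cosh.comp_continuousOn
        ((continuousOn_const (c := γ y)).sub (hγτ.mono (subset_univ _)))).sub
        (Complex.continuous_cos.comp Complex.continuous_ofReal).continuousOn)
    · exact hne
  · exact (continuousOn_const (c := deriv γ y)).sub (hDτ.mono (subset_univ _))

lemma Core.Ig_meas (hc : Core γ r0 ρ M2) {y : ℂ} (hy : y ∈ U ρ) :
    AEStronglyMeasurable (fun x : ℝ => Ig γ x y) (volume.restrict (Ioc (-π) π)) := by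
  have h0 : volume (Ioc (-π) π ∩ {0} : Set ℝ) = 0 :=
    measure_mono_null inter_subset_right (measure_singleton 0)
  have hres : volume.restrict (Ioc (-π) π \ {0}) = volume.restrict (Ioc (-π) π) :=
    Measure.restrict_congr_set (diff_ae_eq_self.2 h0)
  rw [← hres]
  exact (hc.Ig_contOn hy).aestronglyMeasurable (measurableSet_Ioc.diff (measurableSet_singleton 0))

lemma Core.Ig_integrableOn (hc : Core γ r0 ρ M2) {y : ℂ} (hy : y ∈ U ρ) :
    IntegrableOn (fun x : ℝ => Ig γ x y) (Ioc (-π) π) := by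
  apply Integrable.mono' (g := fun _ : ℝ => 2*π/9 * M2)
    (integrableOn_const measure_Ioc_lt_top.ne) (hc.Ig_meas hy)
  refine (ae_restrict_iff' measurableSet_Ioc).2 (ae_of_all _ fun x hx => ?_)
  exact hc.Ig_bound (le_of_lt hy) (abs_le.2 ⟨le_of_lt hx.1, hx.2⟩)

def rseq (r0 ρ : ℝ) (k : ℕ) : ℝ := r0 + (ρ - r0) / 2^k

lemma rseq_zero (r0 ρ : ℝ) : rseq r0 ρ 0 = ρ := by simp [rseq]

lemma rseq_gt {r0 ρ : ℝ} (h : r0 < ρ) (k : ℕ) : r0 < rseq r0 ρ k := by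
  have : (0:ℝ) < (ρ - r0) / 2^k := div_pos (by linarith) (by positivity)
  simp [rseq]; linarith

lemma rseq_le {r0 ρ : ℝ} (h : r0 < ρ) (k : ℕ) : rseq r0 ρ k ≤ ρ := by
  have h1 : (ρ - r0) / 2^k ≤ ρ - r0 := by
    apply div_le_self (by linarith) (one_le_pow₀ (by norm_num))
  simp [rseq]; linarith

lemma rseq_succ_lt {r0 ρ : ℝ} (h : r0 < ρ) (k : ℕ) : rseq r0 ρ (k+1) < rseq r0 ρ k := by
  have h2 : (0:ℝ) < 2^k := by positivity
  have : (ρ - r0) / 2^(k+1) < (ρ - r0) / 2^k := by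
    apply div_lt_div_of_pos_left (by linarith) h2
    rw [pow_succ]; nlinarith
  simp only [rseq]; linarith

lemma rseq_gap {r0 ρ : ℝ} (k : ℕ) :
    rseq r0 ρ k - rseq r0 ρ (k+1) = (ρ - r0) / 2^(k+1) := by
  simp only [rseq, pow_succ]
  field_simp
  ring

lemma Core.J_analytic (hc : Core γ r0 ρ M2) (k : ℕ) {x : ℝ} (hx : |x| ≤ π) :
    AnalyticOnNhd ℂ (iteratedDeriv k (Ig γ x)) (U ρ) := by
  induction k with
  | zero =>
    rw [iteratedDeriv_zero]
    exact (hc.Ig_diffOn hx).analyticOnNhd (isOpen_U ρ)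
  | succ k ih =>
    rw [iteratedDeriv_succ]
    exact ih.deriv

/-- First-order Cauchy estimate on a strip. -/
lemma deriv_bound_strip {f : ℂ → ℂ} {b B : ℝ} (hfd : DifferentiableOn ℂ f (U b))
    (hB : ∀ w ∈ U b, ‖f w‖ ≤ B) {y : ℂ} {r : ℝ} (hr : 0 < r) (hy : |y.im| + r < b) :
    ‖deriv f y‖ ≤ B / r := by
  have hcb : Metric.closedBall y r ⊆ U b := by
    intro w hw
    rw [Metric.mem_closedBall, Complex.dist_eq] at hw
    have h1 : |w.im - y.im| ≤ ‖w - y‖ := by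
      simpa using Complex.abs_im_le_norm (w - y)
    rw [mem_U]
    calc |w.im| ≤ |y.im| + |w.im - y.im| := by
          rw [add_comm]; simpa using abs_add_le (w.im - y.im) y.im
      _ < b := by linarith
  apply Complex.norm_deriv_le_of_forall_mem_sphere_norm_le hr
  · apply DifferentiableOn.diffContOnCl
    rw [closure_ball y hr.ne']
    exact hfd.mono hcb
  · exact fun z hz => hB z (hcb (Metric.sphere_subset_closedBall hz))

lemma Core.J_bound (hc : Core γ r0 ρ M2) (k : ℕ) :
    ∃ B, 0 ≤ B ∧ ∀ x : ℝ, |x| ≤ π → ∀ y ∈ U (rseq r0 ρ k),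
      ‖iteratedDeriv k (Ig γ x) y‖ ≤ B := by
  induction k with
  | zero =>
    refine ⟨2*π/9 * M2, mul_nonneg (by positivity) hc.hM2nn, fun x hx y hy => ?_⟩
    rw [iteratedDeriv_zero]
    exact hc.Ig_bound (le_of_lt (lt_of_lt_of_le hy (rseq_le hc.hρ1 0))) hx
  | succ k ih =>
    obtain ⟨B, hB0, hB⟩ := ih
    set r := rseq r0 ρ k - rseq r0 ρ (k+1) with hrdef
    have hrpos : 0 < r := sub_pos.2 (rseq_succ_lt hc.hρ1 k)
    refine ⟨B / r, by positivity, fun x hx y hy => ?_⟩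
    rw [iteratedDeriv_succ]
    apply deriv_bound_strip ((hc.J_analytic k hx).differentiableOn.mono
      (U_mono (rseq_le hc.hρ1 k))) (hB x hx) hrpos
    rw [mem_U] at hy
    linarith

lemma Core.J_meas (hc : Core γ r0 ρ M2) (k : ℕ) :
    ∀ y ∈ U ρ, AEStronglyMeasurable (fun x : ℝ => iteratedDeriv k (Ig γ x) y)
      (volume.restrict (Ioc (-π) π)) := by
  induction k with
  | zero =>
    intro y hy
    simp only [iteratedDeriv_zero]
    exact hc.Ig_meas hy
  | succ k ih =>
    intro y hy
    have hyn : ∀ n : ℕ, y + ((1/((n:ℝ)+1) : ℝ) : ℂ) ∈ U ρ := fun n => by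
      rw [mem_U]; simpa using (show |y.im| < ρ from hy)
    apply aestronglyMeasurable_of_tendsto_ae (u := atTop)
      (f := fun (n : ℕ) (x : ℝ) => (((1/((n:ℝ)+1) : ℝ)) : ℂ)⁻¹ *
        (iteratedDeriv k (Ig γ x) (y + ((1/((n:ℝ)+1) : ℝ) : ℂ)) - iteratedDeriv k (Ig γ x) y))
    · intro n
      exact (aestronglyMeasurable_const.mul ((ih _ (hyn n)).sub (ih y hy)))
    · refine ((ae_restrict_mem measurableSet_Ioc).mono fun x hx => ?_)
      have hxabs : |x| ≤ π := abs_le.2 ⟨le_of_lt hx.1, hx.2⟩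
      have hdiff : DifferentiableAt ℂ (iteratedDeriv k (Ig γ x)) y :=
        (hc.J_analytic k hxabs).differentiableOn.differentiableAt ((isOpen_U ρ).mem_nhds hy)
      have hder : HasDerivAt (iteratedDeriv k (Ig γ x))
          (iteratedDeriv (k+1) (Ig γ x) y) y := by
        rw [iteratedDeriv_succ]; exact hdiff.hasDerivAt
      have hslope := hasDerivAt_iff_tendsto_slope.1 hder
      have hz : Tendsto (fun n : ℕ => y + ((1/((n:ℝ)+1) : ℝ) : ℂ)) atTop (𝓝[≠] y) := by
        apply tendsto_nhdsWithin_of_tendsto_nhds_of_eventually_within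
        · have h1 : Tendsto (fun n : ℕ => (1/((n:ℝ)+1) : ℝ)) atTop (𝓝 0) :=
            tendsto_one_div_add_atTop_nhds_zero_nat
          have h2 : Tendsto (fun n : ℕ => ((1/((n:ℝ)+1) : ℝ) : ℂ)) atTop (𝓝 0) := by
            simpa using h1.ofReal
          simpa using tendsto_const_nhds.add h2
        · refine Filter.Eventually.of_forall fun n => ?_
          simp only [mem_compl_iff, mem_singleton_iff]
          intro h
          have : ((1/((n:ℝ)+1) : ℝ) : ℂ) = 0 := by
            have := congrArg (fun z => z - y) h
            simpa using this
          rw [Complex.ofReal_eq_zero] at this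
          have : (0:ℝ) < 1/((n:ℝ)+1) := by positivity
          linarith [this]
      have := hslope.comp hz
      convert this using 2 with n
      rw [Function.comp_apply, slope_def_field, add_sub_cancel_left]
      ring
  
lemma Core.J_integrableOn (hc : Core γ r0 ρ M2) (k : ℕ) {y : ℂ} (hy : y ∈ U (rseq r0 ρ k)) :
    IntegrableOn (fun x : ℝ => iteratedDeriv k (Ig γ x) y) (Ioc (-π) π) := by
  obtain ⟨B, hB0, hB⟩ := hc.J_bound k
  apply Integrable.mono' (g := fun _ : ℝ => B)
    (integrableOn_const measure_Ioc_lt_top.ne)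
    (hc.J_meas k y (lt_of_lt_of_le hy (rseq_le hc.hρ1 k)))
  refine (ae_restrict_iff' measurableSet_Ioc).2 (ae_of_all _ fun x hx => ?_)
  exact hB x (abs_le.2 ⟨le_of_lt hx.1, hx.2⟩) y hy

lemma Core.hasDeriv_integral (hc : Core γ r0 ρ M2) (k : ℕ) {y0 : ℂ}
    (hy0 : y0 ∈ U (rseq r0 ρ (k+1))) :
    HasDerivAt (fun y => ∫ x in Ioc (-π) π, iteratedDeriv k (Ig γ x) y)
      (∫ x in Ioc (-π) π, iteratedDeriv (k+1) (Ig γ x) y0) y0 := by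
  obtain ⟨B, hB0, hB⟩ := hc.J_bound k
  set ε := (rseq r0 ρ k - rseq r0 ρ (k+1)) / 2 with hε
  have hgap : 0 < rseq r0 ρ k - rseq r0 ρ (k+1) := sub_pos.2 (rseq_succ_lt hc.hρ1 k)
  have hεpos : 0 < ε := by positivity
  have hball : ∀ y ∈ Metric.ball y0 ε, |y.im| < rseq r0 ρ (k+1) + ε := by
    intro y hyb
    rw [Metric.mem_ball, Complex.dist_eq] at hyb
    have h1 : |y.im - y0.im| ≤ ‖y - y0‖ := by
      simpa using Complex.abs_im_le_norm (y - y0)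
    rw [mem_U] at hy0
    calc |y.im| ≤ |y0.im| + |y.im - y0.im| := by
          rw [add_comm]; simpa using abs_add_le (y.im - y0.im) y0.im
      _ < rseq r0 ρ (k+1) + ε := by linarith
  have hballU : ∀ y ∈ Metric.ball y0 ε, y ∈ U ρ := by
    intro y hyb
    have := hball y hyb
    rw [mem_U]
    have h2 := rseq_le hc.hρ1 k
    have h3 : rseq r0 ρ (k+1) + ε ≤ rseq r0 ρ k := by rw [hε]; linarith
    linarith
  have key := hasDerivAt_integral_of_dominated_loc_of_deriv_le
    (F := fun y x => iteratedDeriv k (Ig γ x) y)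
    (F' := fun y x => iteratedDeriv (k+1) (Ig γ x) y)
    (μ := volume.restrict (Ioc (-π) π)) (x₀ := y0)
    (bound := fun _ => B / ε) (Metric.ball_mem_nhds y0 hεpos)
    ?_ ?_ ?_ ?_ ?_ ?_
  · exact key.2
  · -- hF_meas
    have hyU : y0 ∈ U ρ :=
      lt_of_lt_of_le (lt_of_lt_of_le hy0 (rseq_le hc.hρ1 (k+1))) (le_refl ρ)
    filter_upwards [(isOpen_U ρ).mem_nhds hyU] with y hy
    exact hc.J_meas k y hy
  · -- hF_int
    exact hc.J_integrableOn k (lt_of_lt_of_le hy0 (le_of_lt (rseq_succ_lt hc.hρ1 k)))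
  · -- hF'_meas
    exact hc.J_meas (k+1) y0 (lt_of_lt_of_le hy0 (rseq_le hc.hρ1 (k+1)))
  · -- h_bound
    refine (ae_restrict_mem measurableSet_Ioc).mono fun x hx y hyb => ?_
    have hxabs : |x| ≤ π := abs_le.2 ⟨le_of_lt hx.1, hx.2⟩
    show ‖iteratedDeriv (k+1) (Ig γ x) y‖ ≤ B / ε
    rw [iteratedDeriv_succ]
    apply deriv_bound_strip ((hc.J_analytic k hxabs).differentiableOn.mono
      (U_mono (rseq_le hc.hρ1 k))) (hB x hxabs) hεpos
    have := hball y hyb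
    have : |y.im| + ε < rseq r0 ρ (k+1) + 2*ε := by linarith
    have h2ε : rseq r0 ρ (k+1) + 2*ε = rseq r0 ρ k := by rw [hε]; ring
    linarith
  · -- bound integrable
    exact integrableOn_const measure_Ioc_lt_top.ne
  · -- h_diff
    refine (ae_restrict_mem measurableSet_Ioc).mono fun x hx y hyb => ?_
    have hxabs : |x| ≤ π := abs_le.2 ⟨le_of_lt hx.1, hx.2⟩
    have hdiff : DifferentiableAt ℂ (iteratedDeriv k (Ig γ x)) y :=
      (hc.J_analytic k hxabs).differentiableOn.differentiableAt
        ((isOpen_U ρ).mem_nhds (hballU y hyb))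
    show HasDerivAt (fun w => iteratedDeriv k (Ig γ x) w) (iteratedDeriv (k+1) (Ig γ x) y) y
    rw [iteratedDeriv_succ]
    exact hdiff.hasDerivAt

lemma Core.identity (hc : Core γ r0 ρ M2) (k : ℕ) :
    ∀ y ∈ U (rseq r0 ρ k), iteratedDeriv k (s0C γ) y
      = -2 * ∫ x in Ioc (-π) π, iteratedDeriv k (Ig γ x) y := by
  induction k with
  | zero =>
    intro y _
    simp only [iteratedDeriv_zero]
    rfl
  | succ k ih =>
    intro y hy
    have hyk : y ∈ U (rseq r0 ρ k) := lt_of_lt_of_le hy (le_of_lt (rseq_succ_lt hc.hρ1 k))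
    have hEe : iteratedDeriv k (s0C γ)
        =ᶠ[nhds y] fun w => -2 * ∫ x in Ioc (-π) π, iteratedDeriv k (Ig γ x) w := by
      filter_upwards [(isOpen_U (rseq r0 ρ k)).mem_nhds hyk] with w hw
      exact ih w hw
    rw [iteratedDeriv_succ, hEe.deriv_eq]
    exact (((hc.hasDeriv_integral k hy)).const_mul (-2:ℂ)).deriv

lemma box_compact (a b h : ℝ) :
    IsCompact ((fun p : ℝ × ℝ => (p.1 : ℂ) + p.2 * Complex.I) '' (Icc a b ×ˢ Icc (-h) h)) :=
  ((isCompact_Icc).prod (isCompact_Icc)).image (by continuity)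

lemma mem_box {a b h : ℝ} {z : ℂ} (hre : z.re ∈ Icc a b) (him : z.im ∈ Icc (-h) h) :
    z ∈ (fun p : ℝ × ℝ => (p.1 : ℂ) + p.2 * Complex.I) '' (Icc a b ×ˢ Icc (-h) h) :=
  ⟨(z.re, z.im), ⟨hre, him⟩, Complex.re_add_im z⟩

lemma box_im {a b h : ℝ} {z : ℂ}
    (hz : z ∈ (fun p : ℝ × ℝ => (p.1 : ℂ) + p.2 * Complex.I) '' (Icc a b ×ˢ Icc (-h) h)) :
    |z.im| ≤ h := by
  obtain ⟨⟨p1, p2⟩, ⟨_, hp2⟩, rfl⟩ := hz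
  simpa [abs_le] using ⟨hp2.1, hp2.2⟩

lemma periodic_deriv {f : ℂ → ℂ} {c : ℂ} (h : Function.Periodic f c) :
    Function.Periodic (deriv f) c := fun z => by
  have hfun : (fun w => f (w + c)) = f := funext h
  rw [← deriv_comp_add_const, hfun]

lemma strip_reduce (z : ℂ) : ∃ (m : ℤ) (w : ℂ), w = z - (m : ℂ) * (2*π) ∧
    w.re ∈ Icc 0 (2*π) ∧ w.im = z.im := by
  have hπ := Real.pi_pos
  have h2π : (0:ℝ) < 2*π := by positivity
  refine ⟨⌊z.re / (2*π)⌋, _, rfl, ?_, by simp⟩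
  have h1 := (le_div_iff₀ h2π).1 (Int.floor_le (z.re / (2*π)))
  have h2 := (div_lt_iff₀ h2π).1 (Int.lt_floor_add_one (z.re / (2*π)))
  have hre : (z - (⌊z.re / (2*π)⌋ : ℂ) * (2*π)).re = z.re - (⌊z.re / (2*π)⌋ : ℝ) * (2*π) := by
    simp [Complex.sub_re, Complex.mul_re]
  rw [hre]
  constructor
  · linarith
  · nlinarith

lemma periodic_strip_bound {f : ℂ → ℂ} {R b : ℝ} (hb : 0 ≤ b) (hbR : b < R)
    (hf : ContinuousOn f (U R)) (hper : Function.Periodic f ((2*π : ℝ) : ℂ)) :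
    ∃ M, 0 ≤ M ∧ ∀ z : ℂ, |z.im| ≤ b → ‖f z‖ ≤ M := by
  have hπ := Real.pi_pos
  set K := (fun p : ℝ × ℝ => (p.1 : ℂ) + p.2 * Complex.I) '' (Icc 0 (2*π) ×ˢ Icc (-b) b)
  have hKsub : K ⊆ U R := fun z hz => lt_of_le_of_lt (box_im hz) hbR
  obtain ⟨M, hM⟩ := (box_compact 0 (2*π) b).exists_bound_of_continuousOn (hf.mono hKsub)
  refine ⟨max M 0, le_max_right _ _, fun z hz => ?_⟩
  obtain ⟨m, w, hw, hwre, hwim⟩ := strip_reduce z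
  have hfw : f w = f z := by
    rw [hw]
    have : z - (m : ℂ) * (2*π) = z - m * ((2*π : ℝ) : ℂ) := by push_cast; ring
    rw [this]
    exact hper.sub_int_mul_eq m
  have hwK : w ∈ K := mem_box hwre (by rw [hwim]; exact abs_le.1 hz)
  calc ‖f z‖ = ‖f w‖ := by rw [hfw]
    _ ≤ M := hM w hwK
    _ ≤ max M 0 := le_max_left _ _

lemma small_ext {r0 : ℝ} {γ : ℂ → ℂ} (hγ : GoodGamma r0 γ) :
    ∃ b, r0 < b ∧ b < 2*r0 ∧ ∀ z : ℂ, |z.im| ≤ b → |(deriv γ z).im| ≤ 1/4 := by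
  have hπ := Real.pi_pos
  have hr0 := hγ.pos
  obtain ⟨c, hc1, hc⟩ := hγ.small
  have hopen2 : IsOpen (U (2*r0)) := isOpen_U _
  have hA : AnalyticOnNhd ℂ γ (U (2*r0)) := hγ.holo.analyticOnNhd hopen2
  have hcontD : ContinuousOn (deriv γ) (U (2*r0)) := hA.deriv.continuousOn
  have hcontF : ContinuousOn (fun z => 4 * |(deriv γ z).im|) (U (2*r0)) :=
    continuousOn_const.mul ((continuous_abs.comp Complex.continuous_im).comp_continuousOn hcontD)
  set c₁ := (c+1)/2 with hc₁def
  have hcc1 : c < c₁ := by rw [hc₁def]; linarith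
  have hc11 : c₁ < 1 := by rw [hc₁def]; linarith
  set S := U (2*r0) ∩ (fun z => 4 * |(deriv γ z).im|) ⁻¹' (Iio c₁) with hSdef
  have hSopen : IsOpen S := hcontF.isOpen_inter_preimage hopen2 isOpen_Iio
  set K := (fun p : ℝ × ℝ => (p.1 : ℂ) + p.2 * Complex.I) '' (Icc 0 (2*π) ×ˢ Icc (-r0) r0)
    with hKdef
  have hKS : K ⊆ S := by
    intro z hz
    have hzim : |z.im| ≤ r0 := box_im hz
    have hz2 : z ∈ U (2*r0) := lt_of_le_of_lt hzim (by linarith)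
    refine ⟨hz2, ?_⟩
    -- show 4|im D z| ≤ c < c₁ by approximation from inside
    have hFz : 4 * |(deriv γ z).im| ≤ c := by
      set u : ℕ → ℂ := fun n => (z.re : ℂ) + (z.im * (1 - 1/((n:ℝ)+1)) : ℝ) * Complex.I
        with hudef
      have huU : ∀ n, u n ∈ U r0 := by
        intro n
        have ht0 : 0 ≤ 1 - 1/((n:ℝ)+1) := by
          have : 1/((n:ℝ)+1) ≤ 1 := by
            rw [div_le_one (by positivity)]; linarith [Nat.cast_nonneg (α := ℝ) n]
          linarith
        have ht1 : 1 - 1/((n:ℝ)+1) < 1 := by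
          have : 0 < 1/((n:ℝ)+1) := by positivity
          linarith
        have him : (u n).im = z.im * (1 - 1/((n:ℝ)+1)) := by
          rw [hudef]
          simp only [Complex.add_im, Complex.ofReal_im, Complex.mul_im, Complex.I_im,
            Complex.I_re, Complex.ofReal_re, mul_one, mul_zero, add_zero, zero_add]
        rw [mem_U, him, abs_mul, abs_of_nonneg ht0]
        calc |z.im| * (1 - 1/((n:ℝ)+1)) ≤ r0 * (1 - 1/((n:ℝ)+1)) :=
              mul_le_mul_of_nonneg_right hzim ht0
          _ < r0 * 1 := by
              apply mul_lt_mul_of_pos_left ht1 hr0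
          _ = r0 := mul_one r0
      have hulim : Tendsto u atTop (𝓝 z) := by
        have h1 : Tendsto (fun n : ℕ => 1/((n:ℝ)+1)) atTop (𝓝 0) :=
          tendsto_one_div_add_atTop_nhds_zero_nat
        have h2 : Tendsto (fun n : ℕ => z.im * (1 - 1/((n:ℝ)+1))) atTop (𝓝 z.im) := by
          have := (tendsto_const_nhds (x := (1:ℝ)) (f := atTop (α := ℕ))).sub h1
          simpa using tendsto_const_nhds.mul this
        have h3 : Tendsto (fun n : ℕ => ((z.im * (1 - 1/((n:ℝ)+1)) : ℝ) : ℂ) * Complex.I)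
            atTop (𝓝 ((z.im : ℂ) * Complex.I)) := h2.ofReal.mul_const Complex.I
        have h4 := tendsto_const_nhds (x := (z.re : ℂ)) (f := atTop (α := ℕ)) |>.add h3
        rw [Complex.re_add_im z] at h4
        exact h4
      have hFcont : ContinuousAt (fun z => 4 * |(deriv γ z).im|) z :=
        hcontF.continuousAt (hopen2.mem_nhds hz2)
      have hev : ∀ n, 4 * |(deriv γ (u n)).im| ≤ c := fun n => hc (u n) (huU n)
      exact le_of_tendsto (hFcont.tendsto.comp hulim) (Filter.Eventually.of_forall hev)
    exact lt_of_le_of_lt hFz hcc1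
  obtain ⟨δ, hδpos, hδ⟩ := (box_compact 0 (2*π) r0).exists_thickening_subset_open hSopen hKS
  set e := min (δ/2) (r0/2) with hedef
  have hepos : 0 < e := lt_min (by linarith) (by linarith)
  refine ⟨r0 + e, by linarith, ?_, ?_⟩
  · have : e ≤ r0/2 := min_le_right _ _
    linarith
  · intro z hz
    obtain ⟨m, w, hw, hwre, hwim⟩ := strip_reduce z
    have hDper : Function.Periodic (deriv γ) (2*π : ℂ) := periodic_deriv hγ.periodic
    have hDw : deriv γ w = deriv γ z := by
      rw [hw]
      exact hDper.sub_int_mul_eq m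
    set cl := max (-r0) (min r0 w.im) with hcl
    have hclK : ((w.re : ℂ) + (cl : ℝ) * Complex.I) ∈ K := by
      rw [hKdef]
      exact ⟨(w.re, cl), ⟨hwre, ⟨le_max_left _ _, max_le (by linarith) (min_le_left _ _)⟩⟩, rfl⟩
    have him : |w.im| ≤ r0 + e := by rw [hwim]; exact hz
    have hdist : dist w ((w.re : ℂ) + (cl : ℝ) * Complex.I) ≤ e := by
      rw [Complex.dist_eq]
      have hsub : w - ((w.re : ℂ) + (cl : ℝ) * Complex.I) = ((w.im - cl : ℝ)) * Complex.I := by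
        apply Complex.ext <;> simp
      rw [hsub]
      rw [norm_mul, Complex.norm_I, mul_one, Complex.norm_real, Real.norm_eq_abs]
      rcases le_total w.im r0 with h1 | h1
      · rcases le_total (-r0) w.im with h2 | h2
        · have : cl = w.im := by rw [hcl, min_eq_right h1, max_eq_right h2]
          simp [this, le_of_lt hepos]
        · have : cl = -r0 := by
            rw [hcl]
            have : min r0 w.im = w.im := min_eq_right h1
            rw [this, max_eq_left h2]
          rw [this]
          have : -(r0 + e) ≤ w.im := by
            have := abs_le.1 him
            linarith [this.1]
          rw [abs_le]
          constructor <;> linarith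
      · have : cl = r0 := by
          rw [hcl, min_eq_left h1, max_eq_right (by linarith)]
        rw [this]
        have h3 := (abs_le.1 him).2
        rw [abs_le]
        constructor <;> linarith
    have hwS : w ∈ S := by
      apply hδ
      rw [Metric.mem_thickening_iff]
      refine ⟨_, hclK, lt_of_le_of_lt hdist ?_⟩
      calc e ≤ δ/2 := min_le_left _ _
        _ < δ := by linarith
    have : 4 * |(deriv γ w).im| < c₁ := hwS.2
    rw [hDw] at this
    linarith

lemma goodGamma_core {r0 : ℝ} {γ : ℂ → ℂ} (hγ : GoodGamma r0 γ) :
    ∃ ρ M2, Core γ r0 ρ M2 := by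
  obtain ⟨b, hb1, hb2, hsm⟩ := small_ext hγ
  have hA : AnalyticOnNhd ℂ γ (U (2*r0)) := hγ.holo.analyticOnNhd (isOpen_U _)
  have hcont2 : ContinuousOn (deriv (deriv γ)) (U (2*r0)) := hA.deriv.deriv.continuousOn
  have hper : Function.Periodic γ ((2*π:ℝ):ℂ) := by
    intro z
    have h2 : ((2*π:ℝ):ℂ) = 2*(π:ℂ) := by push_cast; ring
    rw [h2]
    exact hγ.periodic z
  have hper2 : Function.Periodic (deriv (deriv γ)) ((2*π:ℝ):ℂ) :=
    periodic_deriv (periodic_deriv hper)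
  obtain ⟨M2, hM2nn, hM2⟩ := periodic_strip_bound (b := b) (R := 2*r0)
    (le_of_lt (lt_trans hγ.pos hb1)) hb2 hcont2 hper2
  exact ⟨b, M2, ⟨hγ.pos, hb1, hb2, hγ.holo, hsm, hM2nn, hM2⟩⟩

theorem statement8' (r0 : ℝ) (γ : ℂ → ℂ) (hγ : GoodGamma r0 γ) :
    (∀ y1 ∈ U r0, MeasureTheory.IntegrableOn
        (fun z1 : ℝ => K2 z1 (γ y1 - γ (y1 - (z1:ℂ))) * (deriv γ y1 - deriv γ (y1 - (z1:ℂ))))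
        (Set.Ioc (-π) π)) ∧
    DifferentiableOn ℂ (s0C γ) (U r0) ∧
    (∀ k : ℕ, ∃ C0 > (0:ℝ), ∀ y1 ∈ U r0, norm (iteratedDeriv k (s0C γ) y1) ≤ C0) ∧
    (∀ k : ℕ, ∀ y1 ∈ U r0,
      iteratedDeriv k (s0C γ) y1 =
        -2 * ∫ z1 in Set.Ioc (-π) π,
          iteratedDeriv k
            (fun w => K2 z1 (γ w - γ (w - (z1:ℂ))) * (deriv γ w - deriv γ (w - (z1:ℂ)))) y1) := by
  have hπ := Real.pi_pos
  obtain ⟨ρ, M2, hc⟩ := goodGamma_core hγ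
  refine ⟨?_, ?_, ?_, ?_⟩
  · intro y1 hy1
    exact hc.Ig_integrableOn (lt_trans hy1 hc.hρ1)
  · have hfun : s0C γ = fun w => -2 * ∫ x in Ioc (-π) π, iteratedDeriv 0 (Ig γ x) w := by
      funext w
      simp only [iteratedDeriv_zero]
      rfl
    rw [hfun]
    intro y hy
    have hy1 : y ∈ U (rseq r0 ρ 1) := lt_trans hy (rseq_gt hc.hρ1 1)
    exact (((hc.hasDeriv_integral 0 hy1).const_mul (-2:ℂ)).differentiableAt).differentiableWithinAt
  · intro k
    obtain ⟨B, hB0, hB⟩ := hc.J_bound k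
    refine ⟨4*π*B + 1, by positivity, fun y1 hy1 => ?_⟩
    have hyk : y1 ∈ U (rseq r0 ρ k) := lt_trans hy1 (rseq_gt hc.hρ1 k)
    rw [hc.identity k y1 hyk]
    have hles : ‖∫ x in Ioc (-π) π, iteratedDeriv k (Ig γ x) y1‖
        ≤ B * (volume (Ioc (-π) π)).toReal := by
      apply norm_setIntegral_le_of_norm_le_const measure_Ioc_lt_top
        (fun x hx => hB x (abs_le.2 ⟨le_of_lt hx.1, hx.2⟩) y1 hyk)
    have hvol : (volume (Ioc (-π) π)).toReal = 2*π := by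
      rw [Real.volume_Ioc, ENNReal.toReal_ofReal (by linarith)]
      ring
    rw [norm_mul]
    have h2 : ‖(-2 : ℂ)‖ = 2 := by norm_num
    rw [h2]
    rw [hvol] at hles
    nlinarith
  · intro k y1 hy1
    have hyk : y1 ∈ U (rseq r0 ρ k) := lt_trans hy1 (rseq_gt hc.hρ1 k)
    exact hc.identity k y1 hyk


end S8aux

/-- **Lemma 6.6.** If `γ0` extends holomorphically to `U_{2ρ0}` with
`4‖Im γ0'‖_{L∞(U_{ρ0})} < 1`, then the complex extension of the initial normal velocity
`s0` is well defined (the integrand is integrable) and holomorphic on `U_{ρ0}`, each of its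
derivatives is bounded on `U_{ρ0}` by a constant `C0` depending only on finitely many
derivatives of `γ0`, and all derivatives are given by differentiation under the integral. -/
theorem statement8 (r0 : ℝ) (γ : ℂ → ℂ) (hγ : GoodGamma r0 γ) :
    (∀ y1 ∈ U r0, MeasureTheory.IntegrableOn
        (fun z1 : ℝ => K2 z1 (γ y1 - γ (y1 - (z1:ℂ))) * (deriv γ y1 - deriv γ (y1 - (z1:ℂ))))
        (Set.Ioc (-π) π)) ∧
    DifferentiableOn ℂ (s0C γ) (U r0) ∧
    (∀ k : ℕ, ∃ C0 > (0:ℝ), ∀ y1 ∈ U r0, norm (iteratedDeriv k (s0C γ) y1) ≤ C0) ∧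
    (∀ k : ℕ, ∀ y1 ∈ U r0,
      iteratedDeriv k (s0C γ) y1 =
        -2 * ∫ z1 in Set.Ioc (-π) π,
          iteratedDeriv k
            (fun w => K2 z1 (γ w - γ (w - (z1:ℂ))) * (deriv γ w - deriv γ (w - (z1:ℂ)))) y1) :=
  statement8' r0 γ hγ
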